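/- arXiv:math/0411029 — 4 statements merged into one kernel-verified Lean document; each statement's English description precedes it below -/
import Mathlib

section
/- Let p ≥ 5 be a prime and A = -ζ_p^{d+1} where d = (p-1)/2, so that A is a primitive 2p-th root of unity with A^2 = ζ_p. Then A^4 - 1 + A^{-4} is a unit in ℤ[ζ_p]. -/
/-! With `x = ζ²` we have `A⁴ = x`, so the element is `x⁻¹ (x² - x + 1)` and
`(x² - x + 1)(x + 1) = x³ + 1`. For a root of unity `y ≠ 1` of odd order `n`,
`y = (y²)^((n+1)/2)` gives `y - 1 = (y - 1)(y + 1) S` for a geometric sum `S`, so `y + 1` is a unit;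
apply this to `y = x³ = ζ⁶`, which is `≠ 1` because `p ∤ 6`. -/

theorem isUnit_add_one_of_pow_eq_one_of_odd {R : Type*} [CommRing R] [IsDomain R] {y : R}
    {n : ℕ} (hn : Odd n) (hy : y ^ n = 1) (hy1 : y ≠ 1) : IsUnit (y + 1) := by
  obtain ⟨c, rfl⟩ := hn
  have hgeom : (∑ i ∈ Finset.range (c + 1), (y ^ 2) ^ i) * (y ^ 2 - 1) = y - 1 := by
    rw [geom_sum_mul, ← pow_mul, show 2 * (c + 1) = (2 * c + 1) + 1 by ring, pow_succ, hy,
      one_mul]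
  have hinv : (∑ i ∈ Finset.range (c + 1), (y ^ 2) ^ i) * (y + 1) = 1 := by
    refine mul_right_cancel₀ (sub_ne_zero.mpr hy1) ?_
    linear_combination hgeom
  exact .of_mul_eq_one _ (by rw [mul_comm, hinv])

theorem isUnit_sq_sub_add_one_of_pow_eq_one_of_odd {R : Type*} [CommRing R] [IsDomain R] {x : R}
    {n : ℕ} (hn : Odd n) (hx : x ^ n = 1) (hx3 : x ^ 3 ≠ 1) : IsUnit (x ^ 2 - x + 1) := by
  have hcube : IsUnit (x ^ 3 + 1) :=
    isUnit_add_one_of_pow_eq_one_of_odd hn (by rw [← pow_mul, mul_comm, pow_mul, hx, one_pow]) hx3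
  exact isUnit_of_mul_isUnit_left (show (x ^ 2 - x + 1) * (x + 1) = x ^ 3 + 1 by ring ▸ hcube)

theorem Units.isUnit_val_sub_one_add_inv_of_pow_eq_one_of_odd {R : Type*} [CommRing R] [IsDomain R]
    {x : Rˣ} {n : ℕ} (hn : Odd n) (hx : x ^ n = 1) (hx3 : x ^ 3 ≠ 1) :
    IsUnit ((x : R) - 1 + ((x⁻¹ : Rˣ) : R)) := by
  have hsq : IsUnit ((x : R) ^ 2 - x + 1) := isUnit_sq_sub_add_one_of_pow_eq_one_of_odd hn
    (by rw [← Units.val_pow_eq_pow_val, hx, Units.val_one])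
    (by rw [← Units.val_pow_eq_pow_val, Ne, Units.val_eq_one]; exact hx3)
  have hfactor : (x : R) * ((x : R) - 1 + ((x⁻¹ : Rˣ) : R)) = (x : R) ^ 2 - x + 1 := by
    linear_combination x.mul_inv
  exact isUnit_of_mul_isUnit_right (hfactor ▸ hsq)

/-- Let `p ≥ 5` be a prime and `A = -ζ^(d+1)` where `d = (p-1)/2`, so `A` is a
primitive `2p`-th root of unity with `A² = ζ`. Then `A⁴ - 1 + A⁻⁴` is a unit. -/
theorem stmt_3 (O : Type*) [CommRing O] [IsDomain O] (p : ℕ) (hp : p.Prime)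
    (hp5 : 5 ≤ p) (ζ : Oˣ) (hζ : IsPrimitiveRoot ζ p)
    (A : Oˣ) (hA : A = -ζ ^ ((p - 1) / 2 + 1)) :
    IsUnit ((A : O) ^ 4 - 1 + ((A⁻¹ : Oˣ) : O) ^ 4) := by
  have hodd : Odd p := hp.odd_of_ne_two (by omega)
  have hA4 : A ^ 4 = ζ ^ 2 := by
    rw [hA, Even.neg_pow (by decide), ← pow_mul,
      show ((p - 1) / 2 + 1) * 4 = p * 2 + 2 by obtain ⟨k, rfl⟩ := hodd; omega,
      pow_add, pow_mul, hζ.pow_eq_one, one_pow, one_mul]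
  have hx : (ζ ^ 2) ^ p = 1 := by rw [← pow_mul, mul_comm, pow_mul, hζ.pow_eq_one, one_pow]
  have hx3 : (ζ ^ 2) ^ 3 ≠ 1 := by
    rw [← pow_mul, Ne, hζ.pow_eq_one_iff_dvd]
    intro hdvd
    have := Nat.le_of_dvd (by norm_num) hdvd
    interval_cases p <;> simp_all [Nat.odd_iff]
  have key := Units.isUnit_val_sub_one_add_inv_of_pow_eq_one_of_odd hodd hx hx3
  rwa [← hA4, ← inv_pow, Units.val_pow_eq_pow_val, Units.val_pow_eq_pow_val] at key
end

section
/- Let p be an odd prime, ζ_p a primitive p-th root of unity, h = 1 - ζ_p, and d = (p-1)/2. Suppose D ∈ ℤ[ζ_p] (or ℤ[ζ_{4p}] when p ≡ 1 mod 4) satisfies D^2 = -p / (ζ_p - ζ_p^{-1})^2. Then D is a unit times h^{d-1}. -/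
/-!
Since `ζ - ζ⁻¹ = -ζ⁻¹ (1 - ζ²)` and `ζ²` is again a primitive `p`-th root, `ζ - ζ⁻¹` is associated
to `h = 1 - ζ`; and `p = ∏ (1 - ζ^k)` is associated to `h^(p-1)`. Hence `D² h² ~ h^(p-1)`, so
`D² ~ (h^(d-1))²`, and in an integrally closed domain associated squares have associated roots.
-/

namespace IsPrimitiveRoot

variable {R : Type*} [CommRing R] [IsDomain R]

theorem associated_one_sub_one_sub_pow_of_coprime {ζ : R} {n j : ℕ} (hζ : IsPrimitiveRoot ζ n)
    (hj : j.Coprime n) : Associated (1 - ζ) (1 - ζ ^ j) := by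
  simpa only [neg_sub] using (hζ.associated_sub_one_pow_sub_one_of_coprime hj).neg_left.neg_right

theorem associated_one_sub_pow_prime {μ : R} {p : ℕ} (hp : p.Prime) (hμ : IsPrimitiveRoot μ p) :
    Associated ((1 - μ) ^ (p - 1)) (p : R) := by
  obtain ⟨n, rfl⟩ : ∃ n, p = n + 1 := ⟨p - 1, by have := hp.pos; omega⟩
  rw [Nat.add_sub_cancel, Nat.cast_succ, ← hμ.prod_one_sub_pow_eq_order, ← Finset.card_range n,
    ← Finset.prod_const, Finset.card_range]
  refine Associated.prod _ _ _ fun k hk ↦ hμ.associated_one_sub_one_sub_pow_of_coprime ?_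
  exact (Nat.coprime_of_lt_prime k.succ_ne_zero (by simpa using hk) hp).symm

theorem associated_sub_inv_one_sub {ζ : Rˣ} {n : ℕ} (hζ : IsPrimitiveRoot (ζ : R) n)
    (hn : Odd n) : Associated ((ζ : R) - ↑ζ⁻¹) (1 - ζ) := by
  have hfactor : (ζ : R) - ↑ζ⁻¹ = ↑(-ζ⁻¹) * (1 - (ζ : R) ^ 2) := by
    push_cast
    linear_combination -(ζ : R) * ζ.inv_mul
  rw [hfactor]
  exact ((associated_unit_mul_left _ _ (Units.isUnit _)).trans
    (hζ.associated_one_sub_one_sub_pow_of_coprime hn.coprime_two_left).symm)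

end IsPrimitiveRoot

/-- Let `p` be an odd prime, `ζ` a primitive `p`-th root of unity, `h = 1 - ζ`,
`d = (p-1)/2`, in an integrally closed cyclotomic ring `O` (such as `ℤ[ζ_p]` or
`ℤ[ζ_{4p}]`).  If `D ∈ O` satisfies `D² = -p/(ζ - ζ⁻¹)²`, then `D` is a unit
times `h^(d-1)`. -/
theorem stmt_4 (O : Type*) [CommRing O] [IsDomain O] [IsIntegrallyClosed O]
    (p : ℕ) (hp : p.Prime) (hodd : Odd p) (ζ : Oˣ) (hζ : IsPrimitiveRoot ζ p)
    (D : O) (hD : D ^ 2 * ((ζ : O) - ((ζ⁻¹ : Oˣ) : O)) ^ 2 = -(p : O)) :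
    ∃ u : Oˣ, D = (u : O) * (1 - (ζ : O)) ^ ((p - 1) / 2 - 1) := by
  have hz : IsPrimitiveRoot (ζ : O) p := IsPrimitiveRoot.coe_units_iff.mpr hζ
  set m := (p - 1) / 2 - 1
  have hexp : (1 - (ζ : O)) ^ (p - 1) = ((1 - (ζ : O)) ^ m) ^ 2 * (1 - (ζ : O)) ^ 2 := by
    rw [← pow_mul, ← pow_add]
    congr 1
    have := hp.two_le
    obtain ⟨t, rfl⟩ := hodd
    omega
  have hD' : Associated (D ^ 2 * (1 - (ζ : O)) ^ 2)
      (((1 - (ζ : O)) ^ m) ^ 2 * (1 - (ζ : O)) ^ 2) :=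
    calc Associated _ (D ^ 2 * ((ζ : O) - ↑ζ⁻¹) ^ 2) :=
          ((hz.associated_sub_inv_one_sub hodd).symm.pow_pow).mul_left _
      _ = -(p : O) := hD
      Associated _ ((1 - (ζ : O)) ^ (p - 1)) := (hz.associated_one_sub_pow_prime hp).symm.neg_left
      _ = _ := hexp
  have hne : (1 - (ζ : O)) ^ 2 ≠ 0 :=
    pow_ne_zero _ (sub_ne_zero.mpr (hz.ne_one hp.one_lt).symm)
  obtain ⟨u, hu⟩ :=
    ((Associated.pow_iff two_ne_zero).mp (hD'.of_mul_right (Associated.refl _) hne)).symm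
  exact ⟨u, by rw [← hu, mul_comm]⟩
end

section
/- Let n ≥ 3 and d ≥ 2 be integers. Suppose e, e_1,…,e_n, A, A_1,…,A_n are nonnegative integers with A = A_1 + … + A_n, e ≥ 0, e_i ≤ d-1 for all i, and A_i ≥ e_i for all i. Then E := (n-1)(d-1) - ⌊(A - e)/2⌋ + ∑_{i=1}^n ⌊(A_i - e_i)/2⌋ satisfies E ≥ (n-2)(d-2)/2 - 1. In particular, if d > 2 then E ≥ 0, and if d = 2 then E ≥ -1. -/
/-- Let `n ≥ 3`, `d ≥ 2` be integers and `e, e_i, A_i` nonnegative integers with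
`e_i ≤ d-1`, `e_i ≤ A_i`, `A = ∑ A_i` and `e ≤ A`.  Then
`E = (n-1)(d-1) - ⌊(A-e)/2⌋ + ∑_i ⌊(A_i-e_i)/2⌋` satisfies
`E ≥ (n-2)(d-2)/2 - 1`; in particular `E ≥ 0` if `d > 2` and `E ≥ -1` if `d = 2`.
(Here integer division by `2` is floor division.) -/
theorem stmt_8 (n d : ℕ) (hn : 3 ≤ n) (hd : 2 ≤ d)
    (e : ℤ) (he : 0 ≤ e) (ev Av : Fin n → ℤ)
    (hev0 : ∀ i, 0 ≤ ev i) (hevd : ∀ i, ev i ≤ (d : ℤ) - 1)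
    (hAe : ∀ i, ev i ≤ Av i)
    (A : ℤ) (hA : A = ∑ i, Av i) (heA : e ≤ A)
    (E : ℤ)
    (hE : E = ((n : ℤ) - 1) * ((d : ℤ) - 1) - (A - e) / 2 +
      ∑ i, (Av i - ev i) / 2) :
    ((E : ℚ) ≥ ((n : ℚ) - 2) * ((d : ℚ) - 2) / 2 - 1) ∧
      (2 < d → 0 ≤ E) ∧ (d = 2 → -1 ≤ E) := by
  have h2 : 2 * ((A - e) / 2) ≤ A - e := by omega
  have hsum : ∑ i, (Av i - ev i - 1) ≤ ∑ i, 2 * ((Av i - ev i) / 2) :=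
    Finset.sum_le_sum (fun i _ => by omega)
  have hsum1 : ∑ i, (Av i - ev i - 1) = A - (∑ i, ev i) - n := by
    rw [hA]
    rw [Finset.sum_sub_distrib, Finset.sum_sub_distrib, Finset.sum_const,
      Finset.card_univ, Fintype.card_fin]
    push_cast
    ring
  have hse : (∑ i, ev i) ≤ (n : ℤ) * ((d : ℤ) - 1) := by
    calc (∑ i, ev i) ≤ ∑ _i : Fin n, ((d : ℤ) - 1) :=
          Finset.sum_le_sum (fun i _ => hevd i)
      _ = (n : ℤ) * ((d : ℤ) - 1) := by
          rw [Finset.sum_const, Finset.card_univ, Fintype.card_fin]; ring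
  have key : ((n : ℤ) - 2) * ((d : ℤ) - 2) - 2 ≤ 2 * E := by
    have h2E : 2 * E = 2 * (((n : ℤ) - 1) * ((d : ℤ) - 1)) - 2 * ((A - e) / 2)
        + ∑ i, 2 * ((Av i - ev i) / 2) := by
      rw [hE, mul_add, Finset.mul_sum]; ring
    have hnd : 3 ≤ (n : ℤ) := by exact_mod_cast hn
    rw [h2E]
    nlinarith [hsum, hsum1, hse, h2, he]
  refine ⟨?_, ?_, ?_⟩
  · have keyq : ((n : ℚ) - 2) * ((d : ℚ) - 2) - 2 ≤ 2 * (E : ℚ) := by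
      exact_mod_cast key
    linarith
  · intro hd3
    have h1 : (1 : ℤ) ≤ ((n : ℤ) - 2) * ((d : ℤ) - 2) := by
      have : (1 : ℤ) ≤ (n : ℤ) - 2 := by
        have : (3 : ℤ) ≤ n := by exact_mod_cast hn
        omega
      have h2' : (1 : ℤ) ≤ (d : ℤ) - 2 := by
        have : (3 : ℤ) ≤ d := by exact_mod_cast hd3
        omega
      nlinarith
    omega
  · intro hd2
    subst hd2
    have : ((n : ℤ) - 2) * ((2 : ℕ) - 2 : ℤ) - 2 = -2 := by norm_num
    omega
end

section
/- Let O be a Dedekind domain with field of fractions F and an involution (conjugation), and let S ⊆ V be a full O-lattice in a finite-dimensional F-vector space V equipped with a non-degenerate hermitian form taking O-values on S. Let S♯ = {x ∈ V : (x,y) ∈ O for all y ∈ S} be the dual lattice, and let G ⊆ S be a full sublattice. Then G♯/S♯ is isomorphic as an O-module to the conjugate module of S/G. -/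
/-!
Over a principal ideal domain, the Smith normal form gives a basis `v` of `S` such that `G` has
basis `a i • v i`. Then `x ↦ ∑ τ (B x (v i)) • a i • v i` is a `τ`-semilinear bijection of `V`
carrying `G♯` onto `S` and `S♯` onto `G`, and it induces the isomorphism of quotients.

Over a Dedekind domain, choose `d ≠ 0` with `d • S ≤ G` and put `e = d σ(d)`; then `σ e = e` and
`e` kills both `S / G` and `G♯ / S♯`. Localizing at the elements coprime to `e` gives a Dedekind
domain with finitely many primes, hence a principal ideal domain, and it changes neither quotient.
-/

open Submodule nonZeroDivisors

section Quotients

variable {R R' M N : Type*} [CommRing R] [CommRing R'] [AddCommGroup M] [Module R M]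
  [AddCommGroup N] [Module R' N] {σ : R →+* R'}

theorem exists_addEquiv_quotient_of_surjective (f : M →ₛₗ[σ] N) (hf : Function.Surjective f)
    {K : Submodule R M} (hK : ∀ x, f x = 0 ↔ x ∈ K) :
    ∃ φ : (M ⧸ K) ≃+ N, ∀ (c : R) (x : M ⧸ K), φ (c • x) = σ c • φ x := by
  have hle : K ≤ LinearMap.ker f := fun x hx => (hK x).2 hx
  have hinj : Function.Injective (K.liftQ f hle) :=
    LinearMap.ker_eq_bot.mp (K.ker_liftQ_eq_bot f hle fun x hx => (hK x).1 hx)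
  have hsurj : Function.Surjective (K.liftQ f hle) := fun y =>
    let ⟨x, hx⟩ := hf y
    ⟨Submodule.Quotient.mk x, hx⟩
  exact ⟨AddEquiv.ofBijective (K.liftQ f hle).toAddMonoidHom ⟨hinj, hsurj⟩,
    (K.liftQ f hle).map_smulₛₗ⟩

theorem exists_addEquiv_quotient_of_bijective {σ : R →+* R} [Module R N] (Ψ : M →ₛₗ[σ] N)
    (hΨ : Function.Bijective Ψ) {P P' : Submodule R M} {Q Q' : Submodule R N}
    (hQ : ∀ x, Ψ x ∈ Q ↔ x ∈ P) (hQ' : ∀ x, Ψ x ∈ Q' ↔ x ∈ P') :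
    ∃ φ : (P ⧸ P'.comap P.subtype) ≃+ (Q ⧸ Q'.comap Q.subtype),
      ∀ (c : R) (x : P ⧸ P'.comap P.subtype), φ (c • x) = σ c • φ x := by
  refine exists_addEquiv_quotient_of_surjective
    ((Q'.comap Q.subtype).mkQ ∘ₛₗ Ψ.restrict fun x hx => (hQ x).2 hx) ?_ fun x => ?_
  · intro q
    obtain ⟨⟨y, hy⟩, rfl⟩ := Submodule.Quotient.mk_surjective _ q
    obtain ⟨x, rfl⟩ := hΨ.2 y
    exact ⟨⟨x, (hQ x).1 hy⟩, rfl⟩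
  · simp only [LinearMap.comp_apply, mkQ_apply, Quotient.mk_eq_zero, mem_comap, subtype_apply,
      LinearMap.coe_restrict_apply, hQ']

end Quotients

theorem mem_of_isCoprime_of_smul_mem {R M : Type*} [CommRing R] [AddCommGroup M] [Module R M]
    {N : Submodule R M} {s t : R} (h : IsCoprime s t) {x : M} (hs : s • x ∈ N)
    (ht : t • x ∈ N) : x ∈ N := by
  obtain ⟨u, v, huv⟩ := h
  rw [← one_smul R x, ← huv, add_smul, mul_smul, mul_smul]
  exact add_mem (N.smul_mem u hs) (N.smul_mem v ht)

section Localization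

variable {O R' V : Type*} [CommRing O] [CommRing R'] [Algebra O R'] (T : Submonoid O)
  [IsLocalization T R'] [AddCommGroup V] [Module O V] [Module R' V] [IsScalarTower O R' V]

theorem mem_span_iff_exists_smul_mem {W : Submodule O V} {x : V} :
    x ∈ span R' (W : Set V) ↔ ∃ t ∈ T, t • x ∈ W := by
  have := isLocalizedModule_id T V R'
  rw [← Set.image_id (W : Set V), ← LinearMap.id_coe (R := O), ← localized'_eq_span R' T,
    mem_localized']
  constructor
  · rintro ⟨m, hm, t, rfl⟩
    exact ⟨t, t.2, by rwa [← Submonoid.smul_def, IsLocalizedModule.mk'_cancel']⟩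
  · rintro ⟨t, ht, hx⟩
    exact ⟨_, hx, ⟨t, ht⟩, IsLocalizedModule.mk'_eq_iff.mpr rfl⟩

theorem exists_addEquiv_quotient_span_of_smul_mem {e : O} (hTe : ∀ t ∈ T, IsCoprime t e)
    {L M : Submodule O V} (heM : ∀ x ∈ M, e • x ∈ L) :
    ∃ φ : (M ⧸ L.comap M.subtype) ≃+
        (span R' (M : Set V) ⧸ (span R' (L : Set V)).comap (span R' (M : Set V)).subtype),
      ∀ (c : O) (x : M ⧸ L.comap M.subtype), φ (c • x) = algebraMap O R' c • φ x := by
  have heM' : ∀ y ∈ span R' (M : Set V), e • y ∈ span R' (L : Set V) := by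
    intro y hy
    induction hy using span_induction with
    | mem x hx => exact subset_span (heM x hx)
    | zero => rw [smul_zero]; exact zero_mem _
    | add x y _ _ hx hy => rw [smul_add]; exact add_mem hx hy
    | smul r x _ hx => rw [smul_comm]; exact smul_mem _ r hx
  let incl : M →ₛₗ[algebraMap O R'] span R' (M : Set V) :=
    { toFun x := ⟨x, subset_span x.2⟩
      map_add' _ _ := rfl
      map_smul' c x := Subtype.ext (algebraMap_smul R' c (x : V)).symm }
  refine exists_addEquiv_quotient_of_surjective
    (((span R' (L : Set V)).comap (span R' (M : Set V)).subtype).mkQ ∘ₛₗ incl) ?_ fun x => ?_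
  · intro q
    obtain ⟨⟨y, hy⟩, rfl⟩ := Submodule.Quotient.mk_surjective _ q
    obtain ⟨t, ht, hty⟩ := (mem_span_iff_exists_smul_mem T).1 hy
    obtain ⟨u, w, huw⟩ := hTe t ht
    refine ⟨⟨u • t • y, M.smul_mem u hty⟩, (Submodule.Quotient.eq _).2 ?_⟩
    have hy' : u • t • y - y = -(w • e • y) := by
      rw [eq_neg_iff_add_eq_zero, sub_add_eq_add_sub, smul_smul, smul_smul, ← add_smul, huw,
        one_smul, sub_self]
    change u • t • y - y ∈ span R' (L : Set V)
    rw [hy']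
    exact neg_mem (smul_of_tower_mem _ w (heM' y hy))
  · rw [LinearMap.comp_apply, mkQ_apply, Quotient.mk_eq_zero]
    change (x : V) ∈ span R' (L : Set V) ↔ (x : V) ∈ L
    refine ⟨fun hx => ?_, fun hx => subset_span hx⟩
    obtain ⟨t, ht, htx⟩ := (mem_span_iff_exists_smul_mem T).1 hx
    exact mem_of_isCoprime_of_smul_mem (hTe t ht) htx (heM x x.2)

end Localization

section DualLattice

variable {R F V : Type*} [CommRing R] [Field F] [Algebra R F] [AddCommGroup V] [Module F V]
  [Module R V] [IsScalarTower R F V] {τ : F →+* F}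

def dualLattice (B : V →ₗ[F] V →ₛₗ[τ] F) (L : Submodule R V) : Submodule R V where
  carrier := {x | ∀ y ∈ L, B x y ∈ (algebraMap R F).range}
  add_mem' {x x'} hx hx' y hy := by
    rw [map_add, LinearMap.add_apply]
    exact add_mem (hx y hy) (hx' y hy)
  zero_mem' y _ := by
    rw [map_zero, LinearMap.zero_apply]
    exact zero_mem _
  smul_mem' c x hx y hy := by
    rw [← algebraMap_smul F c x, map_smul, LinearMap.smul_apply, smul_eq_mul]
    exact mul_mem ⟨c, rfl⟩ (hx y hy)

variable {B : V →ₗ[F] V →ₛₗ[τ] F}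

theorem mem_dualLattice_span_iff (hτ : ∀ a ∈ (algebraMap R F).range, τ a ∈ (algebraMap R F).range)
    {s : Set V} {x : V} :
    x ∈ dualLattice B (span R s) ↔ ∀ y ∈ s, B x y ∈ (algebraMap R F).range := by
  refine ⟨fun hx y hy => hx y (subset_span hy), fun hx y hy => ?_⟩
  induction hy using span_induction with
  | mem y hy => exact hx y hy
  | zero => rw [map_zero]; exact zero_mem _
  | add y z _ _ hy hz => rw [map_add]; exact add_mem hy hz
  | smul c y _ hy =>
    rw [← algebraMap_smul F c y, LinearMap.map_smulₛₗ, smul_eq_mul]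
    exact mul_mem (hτ _ ⟨c, rfl⟩) hy

theorem mem_dualLattice_iff_basis
    (hτ : ∀ a ∈ (algebraMap R F).range, τ a ∈ (algebraMap R F).range)
    {L : Submodule R V} {ι : Type*} (b : Module.Basis ι R L) {x : V} :
    x ∈ dualLattice B L ↔ ∀ i, B x (b i) ∈ (algebraMap R F).range := by
  have hL : span R (Set.range fun i => (b i : V)) = L := by
    rw [Set.range_comp' Subtype.val b, ← L.coe_subtype, ← map_span, b.span_eq, Submodule.map_top,
      range_subtype]
  have h := mem_dualLattice_span_iff (B := B) hτ (s := Set.range fun i => (b i : V)) (x := x)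
  rwa [hL, Set.forall_mem_range] at h

end DualLattice

section DualLocalization

variable {O R' F V : Type*} [CommRing O] [CommRing R'] [Field F] [Algebra O R'] [Algebra O F]
  [Algebra R' F] [IsScalarTower O R' F] [AddCommGroup V] [Module F V] [Module O V] [Module R' V]
  [IsScalarTower O F V] [IsScalarTower R' F V] [IsScalarTower O R' V] {τ : F →+* F}
  (B : V →ₗ[F] V →ₛₗ[τ] F)

theorem dualLattice_span_eq_span_dualLattice (T : Submonoid O) [IsLocalization T R']
    (hτO : ∀ a ∈ (algebraMap O F).range, τ a ∈ (algebraMap O F).range)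
    (hτR' : ∀ a ∈ (algebraMap R' F).range, τ a ∈ (algebraMap R' F).range)
    {L : Submodule O V} (hL : L.FG) :
    dualLattice B (span R' (L : Set V)) = span R' (dualLattice B L : Set V) := by
  apply le_antisymm
  · intro x hx
    obtain ⟨Y, rfl⟩ := hL
    rw [span_span_of_tower, mem_dualLattice_span_iff hτR'] at hx
    choose r hr using fun y : Y => hx y y.2
    obtain ⟨t, ht⟩ := IsLocalization.exist_integer_multiples T Finset.univ r
    refine (mem_span_iff_exists_smul_mem T).2 ⟨t, t.2, (mem_dualLattice_span_iff hτO).2 ?_⟩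
    intro y hy
    obtain ⟨o, ho⟩ := ht ⟨y, hy⟩ (Finset.mem_univ _)
    refine ⟨o, ?_⟩
    rw [← algebraMap_smul F (t : O) x, map_smul, LinearMap.smul_apply, smul_eq_mul,
      ← hr ⟨y, hy⟩, IsScalarTower.algebraMap_apply O R' F, ho, Algebra.smul_def, map_mul,
      ← IsScalarTower.algebraMap_apply]
  · refine span_le.2 fun x hx => (mem_dualLattice_span_iff hτR').2 fun y hy => ?_
    obtain ⟨o, ho⟩ := hx y hy
    exact ⟨algebraMap O R' o, by rw [← IsScalarTower.algebraMap_apply, ho]⟩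

end DualLocalization

section Conjugation

variable {O F : Type*} [CommRing O] [Field F] [Algebra O F] {σ : O →+* O} {τ : F →+* F}

theorem map_mem_range_algebraMap_iff (hτ : Function.Involutive τ)
    (hστ : ∀ c : O, τ (algebraMap O F c) = algebraMap O F (σ c)) (a : F) :
    τ a ∈ (algebraMap O F).range ↔ a ∈ (algebraMap O F).range := by
  have hτO : ∀ b ∈ (algebraMap O F).range, τ b ∈ (algebraMap O F).range := by
    rintro _ ⟨c, rfl⟩
    exact ⟨σ c, (hστ c).symm⟩
  exact ⟨fun h => hτ a ▸ hτO _ h, hτO a⟩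

theorem involutive_of_map_algebraMap [IsFractionRing O F] (hτ : Function.Involutive τ)
    (hστ : ∀ c : O, τ (algebraMap O F c) = algebraMap O F (σ c)) : Function.Involutive σ :=
  fun c => IsFractionRing.injective O F (by rw [← hστ, ← hστ, hτ])

end Conjugation

section PrincipalIdealRing

variable {O F V : Type*} [CommRing O] [Field F] [Algebra O F] [IsFractionRing O F]
  [AddCommGroup V] [Module F V] [Module O V] [IsScalarTower O F V]

theorem Module.Basis.equivFun_symm_extendOfIsLattice_mem_iff {ι : Type*} [Fintype ι]
    {L : Submodule O V} [L.IsLattice F] (b : Module.Basis ι O L) (c : ι → F) :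
    (b.extendOfIsLattice F).equivFun.symm c ∈ L ↔ ∀ i, c i ∈ (algebraMap O F).range := by
  have hsymm : ∀ o : ι → O, (b.extendOfIsLattice F).equivFun.symm (algebraMap O F ∘ o) =
      ((b.equivFun.symm o : L) : V) := by
    intro o
    simp [Module.Basis.equivFun_symm_apply, algebraMap_smul]
  constructor
  · intro h i
    have hc := hsymm (b.equivFun ⟨_, h⟩)
    rw [LinearEquiv.symm_apply_apply] at hc
    exact ⟨_, congrFun ((b.extendOfIsLattice F).equivFun.symm.injective hc) i⟩
  · intro h
    choose o ho using h
    rw [show c = algebraMap O F ∘ o from funext fun i => (ho i).symm, hsymm]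
    exact Subtype.mem _

theorem LinearMap.SeparatingLeft.bijective_apply_basis [FiniteDimensional F V] {τ : F →+* F}
    {B : V →ₗ[F] V →ₛₗ[τ] F} (hB : B.SeparatingLeft) {ι : Type*} [Fintype ι]
    (b : Module.Basis ι F V) : Function.Bijective fun x i => B x (b i) := by
  let f : V →ₗ[F] ι → F := LinearMap.pi fun i => B.flip (b i)
  have hf : Function.Injective f := by
    refine LinearMap.ker_eq_bot.mp (eq_bot_iff.mpr fun x hx => hB x fun y => ?_)
    have hBx : B x = 0 := b.ext fun i => congrFun (LinearMap.mem_ker.mp hx) i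
    rw [hBx, LinearMap.zero_apply]
  refine ⟨hf, (LinearMap.injective_iff_surjective_of_finrank_eq_finrank ?_).1 hf⟩
  rw [Module.finrank_fintype_fun_eq_card, Module.finrank_eq_card_basis b]

variable [IsDomain O] [IsPrincipalIdealRing O]

theorem Submodule.IsLattice.exists_basis_smul_basis {S G : Submodule O V} [S.IsLattice F]
    [G.IsLattice F] (hGS : G ≤ S) :
    ∃ (bS : Module.Basis (Module.Free.ChooseBasisIndex O S) O S)
      (bG : Module.Basis (Module.Free.ChooseBasisIndex O S) O G)
      (a : Module.Free.ChooseBasisIndex O S → O),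
      ∀ i, (bG i : V) = algebraMap O F (a i) • (bS i : V) := by
  obtain ⟨bS, a, bG, hbG⟩ := Submodule.exists_smith_normal_form_of_rank_eq
    (N := G.comap S.subtype) (Module.Free.chooseBasis O S) (by
      rw [(comapSubtypeEquivOfLe hGS).finrank_eq, Module.finrank, Module.finrank,
        IsLattice.rank' F G, IsLattice.rank' F S])
  exact ⟨bS, bG.map (comapSubtypeEquivOfLe hGS), a, fun i => by simp [hbG, algebraMap_smul]⟩

-- Since `g i = a i • v i` and `τ` is involutive, `∑ τ (B x (v i)) • g i = ∑ τ (B x (g i)) • v i`: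
-- the first form decides membership in `G`, the second membership in `S`.
theorem exists_bijective_semilinear_dualLattice [FiniteDimensional F V] {σ : O →+* O} {τ : F →+* F}
    (hτ : Function.Involutive τ) (hστ : ∀ c : O, τ (algebraMap O F c) = algebraMap O F (σ c))
    {B : V →ₗ[F] V →ₛₗ[τ] F} (hB : B.SeparatingLeft) {S G : Submodule O V} [S.IsLattice F]
    [G.IsLattice F] (hGS : G ≤ S) :
    ∃ Ψ : V →ₛₗ[σ] V, Function.Bijective Ψ ∧ (∀ x, Ψ x ∈ S ↔ x ∈ dualLattice B G) ∧
      (∀ x, Ψ x ∈ G ↔ x ∈ dualLattice B S) := by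
  have hτ_mem := map_mem_range_algebraMap_iff hτ hστ
  have hτO : ∀ a ∈ (algebraMap O F).range, τ a ∈ (algebraMap O F).range := fun a => (hτ_mem a).2
  obtain ⟨bS, bG, a, hbG⟩ := IsLattice.exists_basis_smul_basis (F := F) hGS
  let v := bS.extendOfIsLattice F
  let g := bG.extendOfIsLattice F
  let Ψ : V →ₛₗ[σ] V :=
    { toFun x := g.equivFun.symm fun i => τ (B x (bS i))
      map_add' x y := by simp only [map_add, LinearMap.add_apply, ← Pi.add_def]
      map_smul' c x := by
        rw [← algebraMap_smul F c x, ← algebraMap_smul F (σ c), ← map_smul]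
        congr 1
        ext i
        simp only [map_smul, LinearMap.smul_apply, smul_eq_mul, map_mul, hστ, Pi.smul_apply] }
  have hΨ : ∀ x, Ψ x = v.equivFun.symm fun i => τ (B x (bG i)) := by
    intro x
    simp only [Ψ, LinearMap.coe_mk, AddHom.coe_mk, Module.Basis.equivFun_symm_apply, g, v,
      Module.Basis.extendOfIsLattice_apply, hbG, LinearMap.map_smulₛₗ, smul_eq_mul, map_mul,
      hτ _, mul_comm (algebraMap O F _), mul_smul]
  refine ⟨Ψ, ?_, fun x => ?_, fun x => ?_⟩
  · refine g.equivFun.symm.bijective.comp (hτ.bijective.comp_left.comp ?_)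
    simpa [v] using hB.bijective_apply_basis v
  · rw [hΨ, bS.equivFun_symm_extendOfIsLattice_mem_iff, mem_dualLattice_iff_basis hτO bG]
    simp only [hτ_mem]
  · rw [mem_dualLattice_iff_basis hτO bS]
    exact (bG.equivFun_symm_extendOfIsLattice_mem_iff _).trans (forall_congr' fun i => hτ_mem _)

end PrincipalIdealRing

section Dedekind

variable {O : Type*} [CommRing O]

def coprimeNonZeroDivisors (e : O) : Submonoid O where
  carrier := {t | t ∈ O⁰ ∧ IsCoprime t e}
  mul_mem' ha hb := ⟨mul_mem ha.1 hb.1, ha.2.mul_left hb.2⟩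
  one_mem' := ⟨one_mem _, isCoprime_one_left⟩

theorem coprimeNonZeroDivisors_le (e : O) : coprimeNonZeroDivisors e ≤ O⁰ := fun _ ht => ht.1

theorem map_mem_coprimeNonZeroDivisors [IsDomain O] {σ : O →+* O} (hσ : Function.Injective σ)
    {e t : O} (he : σ e = e) (ht : t ∈ coprimeNonZeroDivisors e) :
    σ t ∈ coprimeNonZeroDivisors e :=
  ⟨mem_nonZeroDivisors_of_ne_zero ((map_ne_zero_iff σ hσ).2 (nonZeroDivisors.ne_zero ht.1)),
    he ▸ ht.2.map σ⟩

variable [IsDedekindDomain O]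

theorem mem_of_disjoint_coprimeNonZeroDivisors {e : O} {p : Ideal O} [hp : p.IsPrime]
    (hp0 : p ≠ ⊥) (hdisj : Disjoint (coprimeNonZeroDivisors e : Set O) p) : e ∈ p := by
  by_contra he
  obtain ⟨y, i, hi, hyi⟩ := (hp.isMaximal hp0).exists_inv he
  obtain ⟨z, hz, hz0⟩ := Submodule.exists_mem_ne_zero_of_ne_bot hp0
  obtain ⟨t, htp, ht0, hte⟩ : ∃ t ∈ p, t ≠ 0 ∧ IsCoprime t e := by
    by_cases hi0 : i = 0
    · subst hi0
      exact ⟨z, hz, hz0, ⟨0, y, by linear_combination hyi⟩⟩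
    · exact ⟨i, hi, hi0, ⟨1, y, by linear_combination hyi⟩⟩
  exact Set.disjoint_left.mp hdisj ⟨mem_nonZeroDivisors_of_ne_zero ht0, hte⟩ htp

theorem finite_setOf_isPrime_disjoint_coprimeNonZeroDivisors {e : O} (he : e ≠ 0) :
    {p : Ideal O | p.IsPrime ∧ Disjoint (coprimeNonZeroDivisors e : Set O) p}.Finite := by
  have hspan : Ideal.span {e} ≠ 0 := by
    rwa [Ideal.zero_eq_bot, Ne, Ideal.span_singleton_eq_bot]
  refine (((Ideal.finite_factors hspan).image (·.asIdeal)).union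
    (Set.finite_singleton ⊥)).subset ?_
  rintro p ⟨hp, hdisj⟩
  by_cases hp0 : p = ⊥
  · exact Or.inr hp0
  · refine Or.inl ⟨⟨p, hp, hp0⟩, ?_, rfl⟩
    rw [Set.mem_ofPred_eq, Ideal.dvd_iff_le, Ideal.span_singleton_le_iff_mem]
    exact mem_of_disjoint_coprimeNonZeroDivisors hp0 hdisj

theorem isPrincipalIdealRing_of_isLocalization_coprimeNonZeroDivisors {e : O} (he : e ≠ 0)
    (R' : Type*) [CommRing R'] [IsDomain R'] [Algebra O R']
    [IsLocalization (coprimeNonZeroDivisors e) R'] : IsPrincipalIdealRing R' := by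
  have := IsLocalization.isDedekindDomain O (coprimeNonZeroDivisors_le e) R'
  have : Finite {p : Ideal O // p.IsPrime ∧ Disjoint (coprimeNonZeroDivisors e : Set O) p} :=
    (finite_setOf_isPrime_disjoint_coprimeNonZeroDivisors he).to_subtype
  exact .of_finite_primes <| Set.finite_coe_iff.mp <|
    Finite.of_equiv _ (IsLocalization.orderIsoOfPrime (coprimeNonZeroDivisors e) R').toEquiv.symm

end Dedekind

section Lattices

variable {O F V : Type*} [CommRing O] [Field F] [Algebra O F]
  [AddCommGroup V] [Module F V] [Module O V] [IsScalarTower O F V]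

theorem Submodule.IsLattice.span_of_isScalarTower {R' : Type*} [CommRing R'] [Algebra O R']
    [Algebra R' F] [Module R' V] [IsScalarTower O R' V] [IsScalarTower R' F V]
    (L : Submodule O V) [L.IsLattice F] : (span R' (L : Set V)).IsLattice F where
  fg := by
    obtain ⟨X, hX⟩ := IsLattice.fg (A := F) (M := L)
    exact ⟨X, by rw [← hX, span_span_of_tower]⟩
  span_eq_top := by rw [span_span_of_tower, IsLattice.span_eq_top]

variable [IsFractionRing O F]

theorem map_mem_localization_subalgebra {T : Submonoid O} (hT : T ≤ O⁰) {σ : O →+* O}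
    {τ : F →+* F} (hστ : ∀ c : O, τ (algebraMap O F c) = algebraMap O F (σ c))
    (hσT : ∀ t ∈ T, σ t ∈ T) {x : F} (hx : x ∈ Localization.subalgebra F T hT) :
    τ x ∈ Localization.subalgebra F T hT := by
  obtain ⟨a, s, hs, rfl⟩ := hx
  exact ⟨σ a, σ s, hσT s hs, by
    rw [IsFractionRing.mk'_eq_div, IsFractionRing.mk'_eq_div, map_div₀, hστ, hστ]⟩

theorem exists_mem_nonZeroDivisors_smul_mem {S G : Submodule O V} (hS : S.FG)
    (hG : span F (G : Set V) = ⊤) : ∃ d ∈ O⁰, ∀ y ∈ S, d • y ∈ G := by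
  have : Module.Finite O S := Module.Finite.iff_fg.mpr hS
  have htors : Module.IsTorsion O (S ⧸ G.comap S.subtype) := by
    intro q
    obtain ⟨y, rfl⟩ := Submodule.Quotient.mk_surjective _ q
    obtain ⟨t, ht, hty⟩ :=
      (mem_span_iff_exists_smul_mem (R' := F) O⁰).1 (hG ▸ mem_top : (y : V) ∈ span F (G : Set V))
    exact ⟨⟨t, ht⟩, (Submodule.Quotient.mk_eq_zero _).2 hty⟩
  obtain ⟨d, hd, hd0⟩ := Submodule.annihilator_top_inter_nonZeroDivisors htors
  refine ⟨d, hd0, fun y hy => ?_⟩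
  have := (Submodule.mem_annihilator.mp hd) (Submodule.Quotient.mk ⟨y, hy⟩) mem_top
  rw [← Submodule.Quotient.mk_smul] at this
  exact (Submodule.Quotient.mk_eq_zero (G.comap S.subtype)).1 this

theorem exists_fixed_smul_mem_and_smul_mem_dualLattice [IsDomain O] {σ : O →+* O}
    {τ : F →+* F} (hτ : Function.Involutive τ)
    (hστ : ∀ c : O, τ (algebraMap O F c) = algebraMap O F (σ c)) (B : V →ₗ[F] V →ₛₗ[τ] F)
    {S G : Submodule O V} (hS : S.FG) (hG : span F (G : Set V) = ⊤) :
    ∃ e : O, e ≠ 0 ∧ σ e = e ∧ (∀ y ∈ S, e • y ∈ G) ∧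
      ∀ x ∈ dualLattice B G, e • x ∈ dualLattice B S := by
  have hσ := involutive_of_map_algebraMap hτ hστ
  obtain ⟨d, hd0, hd⟩ := exists_mem_nonZeroDivisors_smul_mem hS hG
  refine ⟨d * σ d, mul_ne_zero (nonZeroDivisors.ne_zero hd0)
      ((map_ne_zero_iff σ hσ.injective).2 (nonZeroDivisors.ne_zero hd0)),
    by rw [map_mul, hσ, mul_comm], fun y hy => ?_, fun x hx y hy => ?_⟩
  · rw [mul_comm, mul_smul]
    exact G.smul_mem _ (hd y hy)
  · obtain ⟨o, ho⟩ := hx _ (hd y hy)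
    refine ⟨d * o, ?_⟩
    rw [← algebraMap_smul F d y, LinearMap.map_smulₛₗ, hστ, smul_eq_mul] at ho
    rw [← algebraMap_smul F (d * σ d) x, map_smul, LinearMap.smul_apply, smul_eq_mul, map_mul,
      map_mul, ho, mul_assoc]

end Lattices

theorem exists_addEquiv_dualLattice_quotient {O F V : Type*} [CommRing O] [IsDedekindDomain O]
    [Field F] [Algebra O F] [IsFractionRing O F] [AddCommGroup V] [Module F V] [Module O V]
    [IsScalarTower O F V] [FiniteDimensional F V] {σ : O →+* O} {τ : F →+* F}
    (hτ : Function.Involutive τ) (hστ : ∀ c : O, τ (algebraMap O F c) = algebraMap O F (σ c))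
    {B : V →ₗ[F] V →ₛₗ[τ] F} (hB : B.SeparatingLeft) {S G : Submodule O V} [S.IsLattice F]
    [G.IsLattice F] (hGS : G ≤ S) :
    ∃ φ : (dualLattice B G ⧸ (dualLattice B S).comap (dualLattice B G).subtype) ≃+
        (S ⧸ G.comap S.subtype),
      ∀ (c : O) (x : dualLattice B G ⧸ (dualLattice B S).comap (dualLattice B G).subtype),
        φ (c • x) = σ c • φ x := by
  have hτO : ∀ a ∈ (algebraMap O F).range, τ a ∈ (algebraMap O F).range :=
    fun a => (map_mem_range_algebraMap_iff hτ hστ a).2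
  obtain ⟨e, he0, hσe, heS, heG⟩ := exists_fixed_smul_mem_and_smul_mem_dualLattice hτ hστ B
    (IsLattice.fg (A := F) (M := S)) (IsLattice.span_eq_top (M := G))
  set T := coprimeNonZeroDivisors e
  set O' := Localization.subalgebra F T (coprimeNonZeroDivisors_le e)
  have : IsPrincipalIdealRing O' :=
    isPrincipalIdealRing_of_isLocalization_coprimeNonZeroDivisors he0 O'
  have hτO' : ∀ x ∈ O', τ x ∈ O' := fun x => map_mem_localization_subalgebra _ hστ fun t =>
    map_mem_coprimeNonZeroDivisors (involutive_of_map_algebraMap hτ hστ).injective hσe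
  have hτO'range : ∀ a ∈ (algebraMap O' F).range, τ a ∈ (algebraMap O' F).range := by
    rintro _ ⟨c, rfl⟩
    exact ⟨⟨τ c, hτO' c c.2⟩, rfl⟩
  have := IsLattice.span_of_isScalarTower (R' := O') S
  have := IsLattice.span_of_isScalarTower (R' := O') G
  obtain ⟨Ψ, hΨ, hΨS, hΨG⟩ := exists_bijective_semilinear_dualLattice
    (σ := τ.restrict O' O' hτO') hτ (fun c => rfl) hB (span_mono (R := O') hGS)
  obtain ⟨φ, hφ⟩ := exists_addEquiv_quotient_of_bijective Ψ hΨ hΨS hΨG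
  have hE₁ := exists_addEquiv_quotient_span_of_smul_mem (R' := O') T (fun t ht => ht.2) heG
  rw [← dualLattice_span_eq_span_dualLattice B T hτO hτO'range (IsLattice.fg (A := F) (M := S)),
    ← dualLattice_span_eq_span_dualLattice B T hτO hτO'range (IsLattice.fg (A := F) (M := G))]
    at hE₁
  obtain ⟨E₁, hE₁⟩ := hE₁
  obtain ⟨E₂, hE₂⟩ := exists_addEquiv_quotient_span_of_smul_mem (R' := O') T (fun t ht => ht.2) heS
  refine ⟨E₁.trans (φ.trans E₂.symm), fun c x => E₂.injective ?_⟩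
  have hσ' : τ.restrict O' O' hτO' (algebraMap O O' c) = algebraMap O O' (σ c) :=
    Subtype.ext (hστ c)
  simp only [AddEquiv.trans_apply, AddEquiv.apply_symm_apply, hE₁, hφ, hE₂, hσ']

theorem stmt_16_general (O F V : Type*) [CommRing O] [IsDedekindDomain O]
    [Field F] [Algebra O F] [IsFractionRing O F]
    [AddCommGroup V] [Module F V] [Module O V] [IsScalarTower O F V]
    [FiniteDimensional F V]
    (σ : O ≃+* O)
    (σF : F ≃+* F) (hσF : ∀ c, σF (σF c) = c)
    (hcompat : ∀ c : O, σF (algebraMap O F c) = algebraMap O F (σ c))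
    (B : V → V → F)
    (hadd1 : ∀ x y z, B (x + y) z = B x z + B y z)
    (hadd2 : ∀ x y z, B x (y + z) = B x y + B x z)
    (hsmul1 : ∀ (c : F) (x y : V), B (c • x) y = c * B x y)
    (hsmul2 : ∀ (c : F) (x y : V), B x (c • y) = σF c * B x y)
    (hnd : ∀ x, (∀ y, B x y = 0) → x = 0)
    (S G : Submodule O V) (hGS : G ≤ S) (hSfg : S.FG) (hGfg : G.FG)
    (hSfull : Submodule.span F (S : Set V) = ⊤)
    (hGfull : Submodule.span F (G : Set V) = ⊤)
    (Sd Gd : Submodule O V)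
    (hSd : ∀ x : V, x ∈ Sd ↔ ∀ y ∈ S, B x y ∈ (algebraMap O F).range)
    (hGd : ∀ x : V, x ∈ Gd ↔ ∀ y ∈ G, B x y ∈ (algebraMap O F).range) :
    ∃ φ : (↥Gd ⧸ Submodule.comap Gd.subtype Sd) ≃+
        (↥S ⧸ Submodule.comap S.subtype G),
      ∀ (c : O) (x : ↥Gd ⧸ Submodule.comap Gd.subtype Sd),
        φ (c • x) = σ c • φ x := by
  let B' : V →ₗ[F] V →ₛₗ[(σF : F →+* F)] F :=
    LinearMap.mk₂'ₛₗ (RingHom.id F) (σF : F →+* F) B hadd1 hsmul1 hadd2 hsmul2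
  have : S.IsLattice F := ⟨hSfg, hSfull⟩
  have : G.IsLattice F := ⟨hGfg, hGfull⟩
  obtain rfl : Sd = dualLattice B' S := Submodule.ext hSd
  obtain rfl : Gd = dualLattice B' G := Submodule.ext hGd
  have hτ : Function.Involutive (σF : F →+* F) := hσF
  exact exists_addEquiv_dualLattice_quotient (σ := σ) hτ hcompat (B := B') hnd hGS

/-- Let `O` be a Dedekind domain with involution `σ`, `F` its fraction field
with compatible involution `σF`, and `V` a finite-dimensional `F`-vector space
with a non-degenerate hermitian (sesquilinear) form `B`. Let `G ⊆ S` be full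
`O`-lattices in `V` with `B` taking `O`-values on `S`, and let `S♯, G♯` be the
dual lattices. Then `G♯/S♯` is isomorphic, as an `O`-module with conjugate
scalar action, to `S/G`: there is an additive isomorphism `φ` with
`φ (c • x) = σ c • φ x`. -/
theorem stmt_16 (O F V : Type*) [CommRing O] [IsDomain O] [IsDedekindDomain O]
    [Field F] [Algebra O F] [IsFractionRing O F]
    [AddCommGroup V] [Module F V] [Module O V] [IsScalarTower O F V]
    [FiniteDimensional F V]
    (σ : O ≃+* O) (hσ : ∀ c, σ (σ c) = c)
    (σF : F ≃+* F) (hσF : ∀ c, σF (σF c) = c)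
    (hcompat : ∀ c : O, σF (algebraMap O F c) = algebraMap O F (σ c))
    (B : V → V → F)
    (hadd1 : ∀ x y z, B (x + y) z = B x z + B y z)
    (hadd2 : ∀ x y z, B x (y + z) = B x y + B x z)
    (hsmul1 : ∀ (c : F) (x y : V), B (c • x) y = c * B x y)
    (hsmul2 : ∀ (c : F) (x y : V), B x (c • y) = σF c * B x y)
    (hherm : ∀ x y, σF (B x y) = B y x)
    (hnd : ∀ x, (∀ y, B x y = 0) → x = 0)
    (S G : Submodule O V) (hGS : G ≤ S) (hSfg : S.FG) (hGfg : G.FG)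
    (hSfull : Submodule.span F (S : Set V) = ⊤)
    (hGfull : Submodule.span F (G : Set V) = ⊤)
    (hOval : ∀ x ∈ S, ∀ y ∈ S, B x y ∈ (algebraMap O F).range)
    (Sd Gd : Submodule O V)
    (hSd : ∀ x : V, x ∈ Sd ↔ ∀ y ∈ S, B x y ∈ (algebraMap O F).range)
    (hGd : ∀ x : V, x ∈ Gd ↔ ∀ y ∈ G, B x y ∈ (algebraMap O F).range) :
    ∃ φ : (↥Gd ⧸ Submodule.comap Gd.subtype Sd) ≃+
        (↥S ⧸ Submodule.comap S.subtype G),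
      ∀ (c : O) (x : ↥Gd ⧸ Submodule.comap Gd.subtype Sd),
        φ (c • x) = σ c • φ x :=
  stmt_16_general O F V σ σF hσF hcompat B hadd1 hadd2 hsmul1 hsmul2 hnd S G hGS hSfg hGfg hSfull
    hGfull Sd Gd hSd hGd
end
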